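/- Let d ≥ 3 and let x = (x_0, x_1, …, x_d) ∈ ℂ^{d+1} be a point at which every 3×3 minor of the matrix G vanishes. If x_0 = 0, then there exists an index i with 1 ≤ i ≤ d−1 such that x_j = 0 for every j ∈ {0, 1, …, d−1} with j ≠ i; that is, x lies on one of the d−1 coordinate planes 'm_0 = m_1 = ⋯ = m̂_i = ⋯ = m_{d−1} = 0' (where the hat denotes omission, and x_i and x_d are unconstrained). -/
import Mathlib


/-- The `3 × d` matrix `G` of the gamma moment variety, evaluated at a point
`x ∈ ℂ^{d+1}`: the `c`-th column, for `1 ≤ c ≤ d`, is `((c-1)·x_{c-1}, x_{c-1}, x_c)ᵀ`. -/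
def gammaMatrixAt (d : ℕ) (x : Fin (d + 1) → ℂ) : Matrix (Fin 3) (Fin d) ℂ :=
  Matrix.of fun r c =>
    ![(c.val : ℂ) * x ⟨c.val, by have := c.isLt; omega⟩,
      x ⟨c.val, by have := c.isLt; omega⟩,
      x ⟨c.val + 1, by have := c.isLt; omega⟩] r

lemma gamma_key (d : ℕ) (x : Fin (d + 1) → ℂ)
    (hvan : ∀ s : Fin 3 → Fin d, StrictMono s →
      ((gammaMatrixAt d x).submatrix id s).det = 0)
    (a b c : ℕ) (hab : a < b) (hbc : b < c) (hc : c < d)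
    (ha : x ⟨a, by omega⟩ = 0) :
    x ⟨a + 1, by omega⟩ * (x ⟨b, by omega⟩ * x ⟨c, by omega⟩) = 0 := by
  have hs : StrictMono ![(⟨a, by omega⟩ : Fin d), ⟨b, by omega⟩, ⟨c, by omega⟩] := by
    intro i j hij
    fin_cases i <;> fin_cases j <;> simp_all [Fin.lt_def] <;> omega
  have h := hvan _ hs
  simp [gammaMatrixAt, Matrix.det_fin_three, Matrix.submatrix] at h
  rw [ha] at h
  have hbc' : ((b : ℂ) - c) ≠ 0 := by
    have : (b : ℂ) ≠ c := by exact_mod_cast hbc.ne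
    exact sub_ne_zero.mpr this
  have h2 : ((b : ℂ) - c) * (x ⟨a + 1, by omega⟩ * (x ⟨b, by omega⟩ * x ⟨c, by omega⟩)) = 0 := by
    linear_combination h
  rcases mul_eq_zero.mp h2 with h3 | h3
  · exact absurd h3 hbc'
  · exact h3

lemma xcongr (d : ℕ) (x : Fin (d + 1) → ℂ) {a b : ℕ} (ha : a < d + 1) (hb : b < d + 1)
    (h : a = b) : x ⟨a, ha⟩ = x ⟨b, hb⟩ := by subst h; rfl

/-- If every `3 × 3` minor of `G` vanishes at `x` and `x₀ = 0`, then there exists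
`1 ≤ i ≤ d-1` such that `x_j = 0` for all `j ∈ {0,…,d-1}` with `j ≠ i`. -/
theorem gamma_vanishing_slice (d : ℕ) (hd : 3 ≤ d) (x : Fin (d + 1) → ℂ)
    (hvan : ∀ s : Fin 3 → Fin d, StrictMono s →
      ((gammaMatrixAt d x).submatrix id s).det = 0)
    (h0 : x ⟨0, by omega⟩ = 0) :
    ∃ i : ℕ, 1 ≤ i ∧ i ≤ d - 1 ∧
      ∀ j : Fin (d + 1), j.val ≤ d - 1 → j.val ≠ i → x j = 0 := by
  classical
  by_cases hall : ∀ k : ℕ, (hk : k ≤ d - 1) → ∀ h : k < d + 1, x ⟨k, h⟩ = 0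
  · exact ⟨1, le_refl 1, by omega, fun j hj _ => by
      have := hall j.val hj (by omega)
      simpa using this⟩
  · push_neg at hall
    obtain ⟨k, hk, hklt, hxk⟩ := hall
    have hex : ∃ n, ∃ h : n < d + 1, n ≤ d - 1 ∧ x ⟨n, h⟩ ≠ 0 := ⟨k, hklt, hk, hxk⟩
    set i := Nat.find hex with hidef
    obtain ⟨hilt, hile, hxi⟩ := Nat.find_spec hex
    have hmin : ∀ m, m < i → m ≤ d - 1 → ∀ h : m < d + 1, x ⟨m, h⟩ = 0 := by
      intro m hm hm' h
      by_contra hne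
      exact Nat.find_min hex hm ⟨h, hm', hne⟩
    have hi1 : 1 ≤ i := by
      rcases Nat.eq_zero_or_pos i with h | h
      · exfalso
        apply hxi
        rw [xcongr d x hilt (by omega) h]
        exact h0
      · exact h
    refine ⟨i, hi1, hile, ?_⟩
    intro j hj hji
    rcases lt_or_gt_of_ne hji with hlt | hgt
    · have := hmin j.val hlt hj j.isLt
      simpa using this
    · have hjd : j.val < d := by omega
      have hprev : x ⟨i - 1, by omega⟩ = 0 := hmin (i - 1) (by omega) (by omega) (by omega)
      have hkey := gamma_key d x hvan (i - 1) i j.val (by omega) hgt (by omega) hprev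
      rw [xcongr d x (by omega) hilt (by omega : i - 1 + 1 = i)] at hkey
      rcases mul_eq_zero.mp hkey with h3 | h3
      · exact absurd h3 hxi
      · rcases mul_eq_zero.mp h3 with h4 | h4
        · exact absurd h4 hxi
        · simpa using h4
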